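/- arXiv:math/0408154 — 2 statements merged into one kernel-verified Lean document; each statement's English description precedes it below -/
import Mathlib

section
/- For real A with 0 < A < 1, Y > 0, and integer N ≥ 2, (1/(2πi)) ∫_{1-iY}^{1+iY} A^s/s^N ds → 0 as Y → ∞. -/
/-!
Cauchy's theorem on the rectangle `[1, σ] × [-Y, Y]` trades the segment on `Re s = 1` for the two
horizontal sides and the segment on `Re s = σ`. On the horizontal sides `|A^s / s^N| ≤ Y^(-N)`, and
on the far side `|A^s / s^N| ≤ A^σ`, so the integral is `O((σ - 1) / Y^N + Y A^σ)`. Taking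
`σ = Y + 1`, this tends to `0` because `N ≥ 2` and `A < 1`.
-/

open Complex Filter Set Topology
open scoped Interval

section
variable {A : ℝ} {N : ℕ}

lemma norm_ofReal_cpow_div_pow (hA : 0 < A) (s : ℂ) :
    ‖(A : ℂ) ^ s / s ^ N‖ = A ^ s.re / ‖s‖ ^ N := by
  rw [norm_div, norm_pow, norm_cpow_eq_rpow_re_of_pos hA]

lemma norm_ofReal_cpow_div_pow_le_inv_abs_im_pow (hA0 : 0 < A) (hA1 : A ≤ 1) {s : ℂ}
    (hre : 0 ≤ s.re) (him : s.im ≠ 0) :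
    ‖(A : ℂ) ^ s / s ^ N‖ ≤ (|s.im| ^ N)⁻¹ := by
  rw [norm_ofReal_cpow_div_pow hA0, inv_eq_one_div]
  exact div_le_div₀ zero_le_one (Real.rpow_le_one hA0.le hA1 hre) (pow_pos (abs_pos.2 him) N)
    (pow_le_pow_left₀ (abs_nonneg _) (abs_im_le_norm s) N)

lemma norm_ofReal_cpow_div_pow_le_rpow_re (hA : 0 < A) {s : ℂ} (hre : 1 ≤ s.re) :
    ‖(A : ℂ) ^ s / s ^ N‖ ≤ A ^ s.re := by
  rw [norm_ofReal_cpow_div_pow hA]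
  exact div_le_self (by positivity) (one_le_pow₀ (hre.trans (re_le_norm s)))

lemma differentiableOn_ofReal_cpow_div_pow :
    DifferentiableOn ℂ (fun s : ℂ => (A : ℂ) ^ s / s ^ N) {s | 0 < s.re} := fun s hs =>
  have hs0 : s ≠ 0 := fun h => by simp [h] at hs
  ((differentiableAt_id.const_cpow (Or.inr hs0)).div (differentiableAt_pow N)
    (pow_ne_zero N hs0)).differentiableWithinAt

lemma integral_re_one_eq_shifted_contour {Y σ : ℝ} (hσ : 0 < σ) :
    ∫ t in (-Y)..Y, (A : ℂ) ^ ((1 : ℂ) + t * I) / ((1 : ℂ) + t * I) ^ N * I =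
      (∫ x in (1 : ℝ)..σ, (A : ℂ) ^ (x - Y * I) / (x - Y * I) ^ N) -
      (∫ x in (1 : ℝ)..σ, (A : ℂ) ^ (x + Y * I) / (x + Y * I) ^ N) +
      ∫ t in (-Y)..Y, (A : ℂ) ^ (σ + t * I) / (σ + t * I) ^ N * I := by
  have hrect := integral_boundary_rect_eq_zero_of_differentiableOn
    (fun s : ℂ => (A : ℂ) ^ s / s ^ N) (1 - Y * I) (σ + Y * I)
    (differentiableOn_ofReal_cpow_div_pow.mono fun s hs =>
      (lt_inf_iff.2 ⟨one_pos, hσ⟩).trans_le (by simpa using hs.1.1))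
  simp only [sub_im, one_im, mul_im, ofReal_re, I_im, mul_one, ofReal_im, I_re, mul_zero, add_zero,
    zero_sub, ofReal_neg, neg_mul, sub_re, one_re, mul_re, sub_self, sub_zero, add_re, add_im,
    zero_add, smul_eq_mul, ofReal_one] at hrect
  rw [intervalIntegral.integral_mul_const, intervalIntegral.integral_mul_const]
  linear_combination (-1 : ℂ) * hrect

lemma norm_integral_horizontal_le (hA0 : 0 < A) (hA1 : A ≤ 1) {y σ : ℝ} (hy : y ≠ 0)
    (hσ : 1 ≤ σ) :
    ‖∫ x in (1 : ℝ)..σ, (A : ℂ) ^ (x + y * I) / (x + y * I) ^ N‖ ≤ (σ - 1) / |y| ^ N := by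
  have hbound : ∀ x ∈ Ι 1 σ, ‖(A : ℂ) ^ (x + y * I) / (x + y * I) ^ N‖ ≤ (|y| ^ N)⁻¹ := by
    intro x hx
    have hre : 0 ≤ ((x : ℂ) + y * I).re := by
      simpa using zero_le_one.trans (uIoc_of_le hσ ▸ hx).1.le
    have him : ((x : ℂ) + y * I).im = y := by simp
    simpa only [him] using
      norm_ofReal_cpow_div_pow_le_inv_abs_im_pow (N := N) hA0 hA1 hre (him.symm ▸ hy)
  have := intervalIntegral.norm_integral_le_of_norm_le_const hbound
  rwa [abs_of_nonneg (sub_nonneg.2 hσ), inv_mul_eq_div] at this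

lemma norm_integral_vertical_le (hA : 0 < A) {Y σ : ℝ} (hY : 0 ≤ Y) (hσ : 1 ≤ σ) :
    ‖∫ t in (-Y)..Y, (A : ℂ) ^ (σ + t * I) / (σ + t * I) ^ N * I‖ ≤ 2 * Y * A ^ σ := by
  have hbound : ∀ t ∈ Ι (-Y) Y, ‖(A : ℂ) ^ (σ + t * I) / (σ + t * I) ^ N * I‖ ≤ A ^ σ :=
    fun t _ => by
      simpa using norm_ofReal_cpow_div_pow_le_rpow_re (N := N) hA (s := σ + t * I)
        (by simpa using hσ)
  have := intervalIntegral.norm_integral_le_of_norm_le_const hbound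
  rwa [sub_neg_eq_add, abs_of_nonneg (by linarith), mul_comm, ← two_mul] at this

lemma norm_integral_re_one_le (hA0 : 0 < A) (hA1 : A ≤ 1) {Y σ : ℝ} (hY : 0 < Y) (hσ : 1 ≤ σ) :
    ‖∫ t in (-Y)..Y, (A : ℂ) ^ ((1 : ℂ) + t * I) / ((1 : ℂ) + t * I) ^ N * I‖ ≤
      2 * ((σ - 1) / Y ^ N) + 2 * Y * A ^ σ := by
  rw [integral_re_one_eq_shifted_contour (zero_lt_one.trans_le hσ)]
  have hbottom := norm_integral_horizontal_le (N := N) hA0 hA1 (neg_ne_zero.2 hY.ne') hσ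
  have htop := norm_integral_horizontal_le (N := N) hA0 hA1 hY.ne' hσ
  simp only [ofReal_neg, neg_mul, ← sub_eq_add_neg, abs_neg, abs_of_pos hY] at hbottom htop
  exact (norm_add_le_of_le (norm_sub_le_of_le hbottom htop)
    (norm_integral_vertical_le hA0 hY.le hσ)).trans_eq (by ring)

end

lemma tendsto_self_div_pow_atTop_nhds_zero {N : ℕ} (hN : 2 ≤ N) :
    Tendsto (fun Y : ℝ => Y / Y ^ N) atTop (𝓝 0) := by
  obtain ⟨k, rfl⟩ := Nat.exists_eq_add_of_le' hN
  refine (tendsto_inv_atTop_zero.comp (tendsto_pow_atTop (n := k + 1) k.succ_ne_zero)).congr' ?_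
  filter_upwards [eventually_ne_atTop 0] with Y hY
  simp only [Function.comp_apply]
  field_simp
  ring

lemma tendsto_self_mul_rpow_atTop_nhds_zero {A : ℝ} (hA0 : 0 < A) (hA1 : A < 1) :
    Tendsto (fun Y : ℝ => Y * A ^ Y) atTop (𝓝 0) := by
  refine (tendsto_rpow_mul_exp_neg_mul_atTop_nhds_zero 1 (-Real.log A)
    (neg_pos.2 (Real.log_neg hA0 hA1))).congr fun Y => ?_
  rw [Real.rpow_one, Real.rpow_def_of_pos hA0, neg_neg, mul_comm Y]

theorem perron_integral_lt_one (A : ℝ) (hA0 : 0 < A) (hA1 : A < 1) (N : ℕ) (hN : 2 ≤ N) :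
    Tendsto (fun Y : ℝ =>
        (1 / (2 * Real.pi * Complex.I)) *
          ∫ t in (-Y)..Y,
            (A : ℂ) ^ ((1 : ℂ) + t * Complex.I) / ((1 : ℂ) + t * Complex.I) ^ N * Complex.I)
      atTop (nhds 0) := by
  have hbound : ∀ᶠ Y : ℝ in atTop,
      ‖∫ t in (-Y)..Y, (A : ℂ) ^ ((1 : ℂ) + t * I) / ((1 : ℂ) + t * I) ^ N * I‖ ≤
        2 * (Y / Y ^ N) + 2 * A * (Y * A ^ Y) := by
    filter_upwards [eventually_gt_atTop 0] with Y hY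
    have := norm_integral_re_one_le (N := N) hA0 hA1.le hY (σ := Y + 1) (by linarith)
    exact this.trans_eq (by rw [add_sub_cancel_right, Real.rpow_add_one hA0.ne']; ring)
  have hlim : Tendsto (fun Y : ℝ => 2 * (Y / Y ^ N) + 2 * A * (Y * A ^ Y)) atTop (𝓝 0) := by
    simpa using ((tendsto_self_div_pow_atTop_nhds_zero hN).const_mul 2).add
      ((tendsto_self_mul_rpow_atTop_nhds_zero hA0 hA1).const_mul (2 * A))
  simpa using (squeeze_zero_norm' hbound hlim).const_mul (1 / (2 * Real.pi * I))
end

section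
/- The Keating–Snaith constant g_k/k²! · k²! = k²! · ∏_{j=0}^{k-1} j!/(k+j)! is an integer for every integer k ≥ 1; that is, k²! · ∏_{j=0}^{k-1} j!/(k+j)! ∈ ℤ. -/
/-!
By Legendre's formula `v_p(n!) = ∑_{i ≥ 1} ⌊n / p^i⌋`, it suffices that for every `m ≥ 1`
`∑_{j<k} ⌊(k+j)/m⌋ ≤ ⌊k²/m⌋ + ∑_{j<k} ⌊j/m⌋`. Writing `S(n) = ∑_{j<n} ⌊j/m⌋`, this is the case
`a = b = k` of `S(a+b) ≤ S(a) + S(b) + ⌊ab/m⌋`. Since `S(n+m) = S(n) + n`, both sides grow by the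
same amount when `a` or `b` is increased by `m`, which reduces the inequality to `a, b < m`; there
`S(a+b) = max(0, a+b-m) ≤ ab/m` because `(m-a)(m-b) ≥ 0`.
-/

open Finset Nat

theorem Multiset.factorization_prod_map_factorial {p b : ℕ} (hp : p.Prime) (X : Multiset ℕ)
    (hb : ∀ n ∈ X, n < b) :
    (X.map (·!)).prod.factorization p = ∑ i ∈ Finset.Ico 1 b, (X.map (· / p ^ i)).sum := by
  induction X using Multiset.induction_on with
  | empty => simp
  | cons n X ih =>
    have : Fact p.Prime := ⟨hp⟩
    have hn : log p n < b := (log_le_self p n).trans_lt (hb n (Multiset.mem_cons_self n X))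
    rw [Multiset.map_cons, Multiset.prod_cons,
      Nat.factorization_mul (factorial_ne_zero n)
        (Multiset.prod_ne_zero (by simp [factorial_ne_zero])),
      Finsupp.add_apply, factorization_def _ hp, padicValNat_factorial hn,
      ih fun m hm => hb m (Multiset.mem_cons_of_mem hm), ← sum_add_distrib]
    simp

theorem Multiset.prod_map_factorial_dvd_of_sum_map_div_le {X Y : Multiset ℕ}
    (h : ∀ m, 0 < m → (X.map (· / m)).sum ≤ (Y.map (· / m)).sum) :
    (X.map (·!)).prod ∣ (Y.map (·!)).prod := by
  have prod_ne_zero (Z : Multiset ℕ) : (Z.map (·!)).prod ≠ 0 :=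
    Multiset.prod_ne_zero (by simp [factorial_ne_zero])
  refine (factorization_prime_le_iff_dvd (prod_ne_zero X) (prod_ne_zero Y)).mp fun p hp => ?_
  set b := X.sum + Y.sum + 1
  rw [factorization_prod_map_factorial (b := b) hp X fun n hn => by
      have := Multiset.le_sum_of_mem hn; omega,
    factorization_prod_map_factorial (b := b) hp Y fun n hn => by
      have := Multiset.le_sum_of_mem hn; omega]
  exact sum_le_sum fun i _ => h _ (pow_pos hp.pos i)

theorem sum_range_add_div_self {m : ℕ} (hm : 0 < m) (n : ℕ) :
    ∑ j ∈ range m, (n + j) / m = n := by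
  induction n with
  | zero => exact sum_eq_zero fun j hj => Nat.div_eq_of_lt (by simpa using mem_range.mp hj)
  | succ n ih =>
    have shift : ∑ j ∈ range m, (n + 1 + j) / m + n / m =
        ∑ j ∈ range m, (n + j) / m + (n / m + 1) := by
      rw [← Nat.add_div_right n hm, ← sum_range_succ, sum_range_succ']
      simp only [add_zero, Nat.add_right_comm n, add_assoc]
    omega

def floorDivSum (m n : ℕ) : ℕ := ∑ j ∈ range n, j / m

section floorDivSum

variable {m : ℕ}

theorem floorDivSum_add_self (hm : 0 < m) (n : ℕ) :
    floorDivSum m (n + m) = floorDivSum m n + n := by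
  rw [floorDivSum, sum_range_add, sum_range_add_div_self hm, floorDivSum]

theorem floorDivSum_add_le_of_lt {a b : ℕ} (ha : a < m) (hb : b < m) :
    floorDivSum m (a + b) ≤ a * b / m := by
  have hm : 0 < m := by omega
  rcases le_or_gt (a + b) m with hab | hab
  · refine (sum_eq_zero fun j hj => Nat.div_eq_of_lt ?_).trans_le (Nat.zero_le _)
    have := mem_range.mp hj
    omega
  · obtain ⟨c, hc⟩ : ∃ c, a + b = m + c := ⟨a + b - m, by omega⟩
    have hfloor : floorDivSum m (m + c) = c := by
      rw [floorDivSum, sum_range_add, sum_eq_zero fun j hj => Nat.div_eq_of_lt (mem_range.mp hj),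
        sum_congr rfl fun j hj => by
          rw [Nat.add_div_left _ hm, Nat.div_eq_of_lt (by have := mem_range.mp hj; omega)]]
      simp
    rw [hc, hfloor, Nat.le_div_iff_mul_le hm]
    -- `(m - a) (m - b) ≥ 0`
    nlinarith

theorem floorDivSum_add_le_of_add_self_le (hm : 0 < m) {a b : ℕ}
    (h : floorDivSum m (a + b) ≤ floorDivSum m a + floorDivSum m b + a * b / m) :
    floorDivSum m (a + m + b) ≤ floorDivSum m (a + m) + floorDivSum m b + (a + m) * b / m := by
  rw [Nat.add_right_comm, floorDivSum_add_self hm, floorDivSum_add_self hm, add_mul,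
    Nat.add_mul_div_left _ _ hm]
  omega

theorem floorDivSum_add_le (hm : 0 < m) (a b : ℕ) :
    floorDivSum m (a + b) ≤ floorDivSum m a + floorDivSum m b + a * b / m := by
  induction a using Nat.strong_induction_on generalizing b with
  | _ a iha =>
  induction b using Nat.strong_induction_on with
  | _ b ihb =>
  by_cases ha : m ≤ a
  · obtain ⟨a', rfl⟩ : ∃ a', a = a' + m := ⟨a - m, by omega⟩
    exact floorDivSum_add_le_of_add_self_le hm (iha a' (by omega) b)
  by_cases hb : m ≤ b
  · obtain ⟨b', rfl⟩ : ∃ b', b = b' + m := ⟨b - m, by omega⟩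
    have h := floorDivSum_add_le_of_add_self_le hm (a := b') (b := a) (by
      rw [add_comm b', mul_comm b']
      linarith [ihb b' (by omega)])
    rw [add_comm a, mul_comm a]
    linarith
  · exact (floorDivSum_add_le_of_lt (by omega) (by omega)).trans (Nat.le_add_left _ _)

end floorDivSum

theorem prod_factorial_add_dvd (k : ℕ) :
    ∏ j ∈ range k, (k + j)! ∣ (k ^ 2)! * ∏ j ∈ range k, j ! := by
  have floor_sums_le (m : ℕ) (hm : 0 < m) :
      ∑ j ∈ range k, (k + j) / m ≤ k ^ 2 / m + ∑ j ∈ range k, j / m := by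
    have h := floorDivSum_add_le hm k k
    simp only [floorDivSum, sum_range_add, sq] at h ⊢
    omega
  have h := Multiset.prod_map_factorial_dvd_of_sum_map_div_le
    (X := (range k).val.map (k + ·)) (Y := k ^ 2 ::ₘ (range k).val) fun m hm => by
      simpa [Multiset.map_map, Finset.sum_eq_multiset_sum] using floor_sums_le m hm
  simpa [Multiset.map_map, Finset.prod_eq_multiset_prod] using h

theorem keating_snaith_gk_integer_general (k : ℕ) :
    ∃ g : ℤ, ((k ^ 2).factorial : ℚ) *
        ∏ j ∈ Finset.range k, ((j.factorial : ℚ) / ((k + j).factorial : ℚ)) = g := by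
  obtain ⟨g, hg⟩ := prod_factorial_add_dvd k
  refine ⟨g, ?_⟩
  have hD : ((∏ j ∈ range k, (k + j)! : ℕ) : ℚ) ≠ 0 := by
    exact_mod_cast prod_ne_zero_iff.mpr fun j _ => factorial_ne_zero _
  rw [prod_div_distrib, ← Nat.cast_prod, ← Nat.cast_prod, mul_div_assoc', div_eq_iff hD,
    ← Nat.cast_mul, hg]
  push_cast
  ring

theorem keating_snaith_gk_integer (k : ℕ) (hk : 1 ≤ k) :
    ∃ g : ℤ, ((k ^ 2).factorial : ℚ) *
        ∏ j ∈ Finset.range k, ((j.factorial : ℚ) / ((k + j).factorial : ℚ)) = g :=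
  keating_snaith_gk_integer_general k
end
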